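/- lim_{γ→∞} φ(γ) = 2, where φ(γ) = 2^{(1-γ)/2}·(γ/2)·∫_0^∞ (s+1)^{-(γ+2)/2}(s+2)^{(γ-1)/2} ds. -/

import Mathlib

/-!
With `p = γ / 2` the integrand factors as `√(s + 2) · k_p(s)`, where
`k_p(s) = (s + 1)^(-p-1) (s + 2)^(p-1)` is the derivative of `-((s + 2) / (s + 1))^p / p`,
so `∫₀^∞ k_p = (2^p - 1) / p`. Bounding `√(s + 2) ≥ √2` gives
`φ(γ) ≥ 2 - √2 · 2^((1-γ)/2)`. For the upper bound fix `T > 0`: on `(0, T]` use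
`√(s + 2) ≤ √(T + 2)`, and on `(T, ∞)` write the integrand as
`((s + 2) / (s + 1))^((γ-1)/2) · (s + 1)^(-3/2)` with first factor at most
`((T + 2) / (T + 1))^((γ-1)/2)`. After the prefactor the tail is `O(γ q^(γ/2))` with
`q = (T + 2) / (2 (T + 1)) < 1`, so `limsup φ ≤ √(2 (T + 2))`, which tends to `2` as `T → 0`.
-/

open Real MeasureTheory Filter Set Topology

noncomputable def phiKernel (p s : ℝ) : ℝ := (s + 1) ^ (-p - 1) * (s + 2) ^ (p - 1)

noncomputable def phiIntegrand (γ s : ℝ) : ℝ :=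
  (s + 1) ^ (-(γ + 2) / 2) * (s + 2) ^ ((γ - 1) / 2)

noncomputable def phi (γ : ℝ) : ℝ :=
  2 ^ ((1 - γ) / 2) * (γ / 2) * ∫ s in Ioi 0, phiIntegrand γ s

lemma phiKernel_nonneg (p : ℝ) {s : ℝ} (hs : -1 < s) : 0 ≤ phiKernel p s := by
  have : 0 < s + 1 := by linarith
  have : 0 < s + 2 := by linarith
  unfold phiKernel
  positivity

lemma hasDerivAt_neg_inv_mul_ratio_rpow {p s : ℝ} (hp : p ≠ 0) (hs : 0 < s + 1) :
    HasDerivAt (fun x => -p⁻¹ * ((x + 2) / (x + 1)) ^ p) (phiKernel p s) s := by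
  have hs2 : 0 < s + 2 := by linarith
  have hratio : HasDerivAt (fun x => (x + 2) / (x + 1)) (-((s + 1) ^ 2)⁻¹) s := by
    refine (((hasDerivAt_id' s).add_const 2).div ((hasDerivAt_id' s).add_const 1)
      hs.ne').congr_deriv ?_
    field_simp
    ring
  have hpow : (s + 1) ^ (-p - 1) = ((s + 1) ^ (p - 1))⁻¹ * ((s + 1) ^ 2)⁻¹ := by
    rw [← rpow_neg hs.le, ← rpow_two, ← rpow_neg hs.le, ← rpow_add hs]
    congr 1
    ring
  refine ((hratio.rpow_const (p := p) (Or.inl (div_pos hs2 hs).ne')).const_mul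
    (-p⁻¹)).congr_deriv ?_
  rw [phiKernel, div_rpow hs2.le hs.le, hpow]
  field_simp

lemma tendsto_ratio_rpow_atTop (p : ℝ) :
    Tendsto (fun x : ℝ => ((x + 2) / (x + 1)) ^ p) atTop (𝓝 1) := by
  have hinv : Tendsto (fun x : ℝ => 1 + (x + 1)⁻¹) atTop (𝓝 1) := by
    simpa using (tendsto_const_nhds (x := (1 : ℝ))).add
      (tendsto_inv_atTop_zero.comp (tendsto_atTop_add_const_right atTop (1 : ℝ) tendsto_id))
  have hratio : Tendsto (fun x : ℝ => (x + 2) / (x + 1)) atTop (𝓝 1) := by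
    refine hinv.congr' ?_
    filter_upwards [eventually_gt_atTop 0] with x hx
    field_simp
    ring
  simpa [Function.comp_def] using
    (continuousAt_rpow_const 1 p (Or.inl one_ne_zero)).tendsto.comp hratio

lemma integrableOn_phiKernel {p c : ℝ} (hp : p ≠ 0) (hc : -1 < c) :
    IntegrableOn (phiKernel p) (Ioi c) :=
  integrableOn_Ioi_deriv_of_nonneg'
    (fun x hx => hasDerivAt_neg_inv_mul_ratio_rpow hp (by linarith [mem_Ici.1 hx]))
    (fun x hx => phiKernel_nonneg p (hc.trans hx))
    ((tendsto_ratio_rpow_atTop p).const_mul (-p⁻¹))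

lemma integral_phiKernel {p c : ℝ} (hp : p ≠ 0) (hc : -1 < c) :
    ∫ s in Ioi c, phiKernel p s = (((c + 2) / (c + 1)) ^ p - 1) / p := by
  rw [integral_Ioi_of_hasDerivAt_of_nonneg'
    (fun x hx => hasDerivAt_neg_inv_mul_ratio_rpow hp (by linarith [mem_Ici.1 hx]))
    (fun x hx => phiKernel_nonneg p (hc.trans hx))
    ((tendsto_ratio_rpow_atTop p).const_mul (-p⁻¹))]
  field_simp
  ring

lemma integral_Ioi_zero_phiKernel {p : ℝ} (hp : p ≠ 0) :
    ∫ s in Ioi 0, phiKernel p s = (2 ^ p - 1) / p := by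
  simpa using integral_phiKernel hp neg_one_lt_zero

lemma phiIntegrand_eq_sqrt_mul (γ : ℝ) {s : ℝ} (hs : 0 < s + 2) :
    phiIntegrand γ s = √(s + 2) * phiKernel (γ / 2) s := by
  rw [phiIntegrand, phiKernel, sqrt_eq_rpow, show (γ - 1) / 2 = 1 / 2 + (γ / 2 - 1) by ring,
    rpow_add hs, show -(γ + 2) / 2 = -(γ / 2) - 1 by ring]
  ring

lemma phiIntegrand_eq_ratio_rpow_mul (γ : ℝ) {s : ℝ} (hs : 0 < s + 1) :
    phiIntegrand γ s = ((s + 2) / (s + 1)) ^ ((γ - 1) / 2) * (s + 1) ^ (-3 / 2 : ℝ) := by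
  have hs2 : 0 < s + 2 := by linarith
  rw [phiIntegrand, div_rpow hs2.le hs.le, show -(γ + 2) / 2 = -((γ - 1) / 2) + -3 / 2 by ring,
    rpow_add hs, rpow_neg hs.le]
  field_simp

lemma integrableOn_phiIntegrand (γ : ℝ) : IntegrableOn (phiIntegrand γ) (Ioi 0) := by
  refine Integrable.mono' ((integrableOn_add_rpow_Ioi_of_lt (a := -3 / 2) (m := 1)
    (by norm_num) (by norm_num : (-1 : ℝ) < 0)).const_mul (2 ^ |(γ - 1) / 2|)) ?_ ?_
  · exact (by unfold phiIntegrand; fun_prop : Measurable (phiIntegrand γ)).aestronglyMeasurable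
  · filter_upwards [ae_restrict_mem measurableSet_Ioi] with s (hs : 0 < s)
    have hs1 : 0 < s + 1 := by linarith
    have hu : 1 ≤ (s + 2) / (s + 1) := by rw [le_div_iff₀ hs1]; linarith
    have hu2 : (s + 2) / (s + 1) ≤ 2 := by rw [div_le_iff₀ hs1]; linarith
    rw [phiIntegrand_eq_ratio_rpow_mul γ hs1, norm_mul, norm_of_nonneg (by positivity),
      norm_of_nonneg (by positivity)]
    gcongr
    calc ((s + 2) / (s + 1)) ^ ((γ - 1) / 2) ≤ ((s + 2) / (s + 1)) ^ |(γ - 1) / 2| :=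
          rpow_le_rpow_of_exponent_le hu (le_abs_self _)
      _ ≤ 2 ^ |(γ - 1) / 2| := by gcongr

lemma two_rpow_mul_two_rpow_sub_one (γ : ℝ) :
    (2 : ℝ) ^ ((1 - γ) / 2) * (2 ^ (γ / 2) - 1) = √2 - 2 ^ ((1 - γ) / 2) := by
  rw [mul_sub, mul_one, ← rpow_add two_pos, sqrt_eq_rpow,
    show (1 - γ) / 2 + γ / 2 = 1 / 2 by ring]

lemma two_sub_le_phi {γ : ℝ} (hγ : 0 < γ) : 2 - √2 * 2 ^ ((1 - γ) / 2) ≤ phi γ := by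
  have hp : γ / 2 ≠ 0 := by positivity
  have hint : √2 * ((2 ^ (γ / 2) - 1) / (γ / 2)) ≤ ∫ s in Ioi 0, phiIntegrand γ s := by
    rw [← integral_Ioi_zero_phiKernel hp, ← integral_const_mul]
    refine setIntegral_mono_on ((integrableOn_phiKernel hp neg_one_lt_zero).const_mul _)
      (integrableOn_phiIntegrand γ) measurableSet_Ioi fun s (hs : 0 < s) => ?_
    rw [phiIntegrand_eq_sqrt_mul γ (by linarith)]
    gcongr
    · exact phiKernel_nonneg _ (by linarith)
    · linarith
  calc 2 - √2 * 2 ^ ((1 - γ) / 2) = √2 * (2 ^ ((1 - γ) / 2) * (2 ^ (γ / 2) - 1)) := by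
        rw [two_rpow_mul_two_rpow_sub_one, mul_sub, mul_self_sqrt zero_le_two]
    _ = 2 ^ ((1 - γ) / 2) * (γ / 2) * (√2 * ((2 ^ (γ / 2) - 1) / (γ / 2))) := by
        field_simp
    _ ≤ phi γ := by unfold phi; gcongr

lemma phiIntegrand_le {γ T s : ℝ} (hγ : 1 ≤ γ) (hT : -1 < T) (hs : -1 < s) :
    phiIntegrand γ s ≤ √(T + 2) * phiKernel (γ / 2) s
      + ((T + 2) / (T + 1)) ^ ((γ - 1) / 2) * (s + 1) ^ (-3 / 2 : ℝ) := by
  have hs1 : 0 < s + 1 := by linarith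
  have hs2 : 0 < s + 2 := by linarith
  have hT1 : 0 < T + 1 := by linarith
  have hT2 : 0 < T + 2 := by linarith
  rcases le_or_gt s T with hsT | hTs
  · refine le_add_of_le_of_nonneg ?_ (by positivity)
    rw [phiIntegrand_eq_sqrt_mul γ hs2]
    gcongr
    exact phiKernel_nonneg _ hs
  · refine le_add_of_nonneg_of_le (mul_nonneg (sqrt_nonneg _) (phiKernel_nonneg _ hs)) ?_
    rw [phiIntegrand_eq_ratio_rpow_mul γ hs1]
    have : (s + 2) / (s + 1) ≤ (T + 2) / (T + 1) := by
      rw [div_le_div_iff₀ hs1 hT1]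
      linarith
    gcongr

-- Only the finiteness of the tail constant `∫ (s + 1)^(-3/2)` matters, not its value.
lemma phi_le {γ T : ℝ} (hγ : 1 ≤ γ) (hT : -1 < T) :
    phi γ ≤ √(2 * (T + 2)) + γ / 2 * (∫ s in Ioi (0 : ℝ), (s + 1) ^ (-3 / 2 : ℝ)) *
      ((T + 2) / (T + 1) / 2) ^ ((γ - 1) / 2) := by
  set C := ∫ s in Ioi (0 : ℝ), (s + 1) ^ (-3 / 2 : ℝ)
  set u := (T + 2) / (T + 1)
  have hp : γ / 2 ≠ 0 := by positivity
  have hC : 0 ≤ C := setIntegral_nonneg measurableSet_Ioi fun s (hs : 0 < s) => by positivity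
  have hu : 0 ≤ u := div_nonneg (by linarith) (by linarith)
  have hkernel := integrableOn_phiKernel hp neg_one_lt_zero
  have htail : IntegrableOn (fun s : ℝ => (s + 1) ^ (-3 / 2 : ℝ)) (Ioi 0) :=
    integrableOn_add_rpow_Ioi_of_lt (by norm_num) (by norm_num)
  have hint : ∫ s in Ioi 0, phiIntegrand γ s
      ≤ √(T + 2) * ((2 ^ (γ / 2) - 1) / (γ / 2)) + u ^ ((γ - 1) / 2) * C := by
    rw [← integral_Ioi_zero_phiKernel hp, ← integral_const_mul, ← integral_const_mul,
      ← integral_add (hkernel.const_mul _) (htail.const_mul _)]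
    exact setIntegral_mono_on (integrableOn_phiIntegrand γ)
      ((hkernel.const_mul _).add (htail.const_mul _)) measurableSet_Ioi
      fun s (hs : 0 < s) => phiIntegrand_le hγ hT (by linarith)
  have hscale : (2 : ℝ) ^ ((1 - γ) / 2) * u ^ ((γ - 1) / 2) = (u / 2) ^ ((γ - 1) / 2) := by
    rw [div_rpow hu zero_le_two, show (1 - γ) / 2 = -((γ - 1) / 2) by ring, rpow_neg zero_le_two]
    ring
  calc phi γ ≤ 2 ^ ((1 - γ) / 2) * (γ / 2) *
        (√(T + 2) * ((2 ^ (γ / 2) - 1) / (γ / 2)) + u ^ ((γ - 1) / 2) * C) := by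
        unfold phi; gcongr
    _ = √(T + 2) * (√2 - 2 ^ ((1 - γ) / 2)) +
        γ / 2 * C * (2 ^ ((1 - γ) / 2) * u ^ ((γ - 1) / 2)) := by
        rw [← two_rpow_mul_two_rpow_sub_one]
        field_simp
    _ ≤ √(T + 2) * √2 + γ / 2 * C * (u / 2) ^ ((γ - 1) / 2) := by
        rw [hscale]
        gcongr
        exact sub_le_self _ (by positivity)
    _ = √(2 * (T + 2)) + γ / 2 * C * (u / 2) ^ ((γ - 1) / 2) := by
        rw [mul_comm (2 : ℝ), sqrt_mul' _ zero_le_two]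

lemma tendsto_two_rpow_one_sub_div_two :
    Tendsto (fun γ : ℝ => (2 : ℝ) ^ ((1 - γ) / 2)) atTop (𝓝 0) :=
  (tendsto_rpow_atBot_of_base_gt_one 2 one_lt_two).comp <|
    (tendsto_atBot_add_const_left atTop 1 tendsto_neg_atTop_atBot).atBot_div_const two_pos

lemma tendsto_mul_rpow_of_lt_one {q : ℝ} (hq0 : 0 < q) (hq1 : q < 1) {a : ℝ} (ha : 0 < a)
    (c : ℝ) : Tendsto (fun x => x * q ^ (a * x + c)) atTop (𝓝 0) := by
  have hb : 0 < -(a * log q) := neg_pos.2 (mul_neg_of_pos_of_neg ha (log_neg hq0 hq1))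
  have := (tendsto_rpow_mul_exp_neg_mul_atTop_nhds_zero 1 _ hb).const_mul (q ^ c)
  rw [mul_zero] at this
  refine this.congr fun x => ?_
  rw [rpow_one, rpow_add hq0, rpow_def_of_pos hq0 (a * x)]
  ring_nf

/-- `lim_{γ→∞} φ(γ) = 2`, where
`φ(γ) = 2^{(1-γ)/2}·(γ/2)·∫_0^∞ (s+1)^{-(γ+2)/2}(s+2)^{(γ-1)/2} ds`. -/
theorem phi_tendsto_two :
    Tendsto (fun γ : ℝ =>
      (2 : ℝ) ^ ((1 - γ) / 2) * (γ / 2) *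
        ∫ s in Set.Ioi (0 : ℝ), (s + 1) ^ (-(γ + 2) / 2) * (s + 2) ^ ((γ - 1) / 2))
      atTop (nhds 2) := by
  change Tendsto phi atTop (𝓝 2)
  refine tendsto_order.2 ⟨fun b hb => ?_, fun b hb => ?_⟩
  · have hlow : Tendsto (fun γ : ℝ => 2 - √2 * 2 ^ ((1 - γ) / 2)) atTop (𝓝 2) := by
      simpa using tendsto_const_nhds.sub (tendsto_two_rpow_one_sub_div_two.const_mul √2)
    filter_upwards [hlow.eventually_const_lt hb, eventually_gt_atTop 0] with γ hγb hγ
    exact hγb.trans_le (two_sub_le_phi hγ)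
  · obtain ⟨T, hT, hTb⟩ : ∃ T > 0, √(2 * (T + 2)) < b :=
      ⟨(b ^ 2 - 4) / 4, by nlinarith, by rw [sqrt_lt' (by linarith)]; nlinarith⟩
    have hq : (T + 2) / (T + 1) / 2 < 1 := by rw [div_div, div_lt_one (by positivity)]; linarith
    set C := ∫ s in Ioi (0 : ℝ), (s + 1) ^ (-3 / 2 : ℝ)
    have hup : Tendsto (fun γ =>
        √(2 * (T + 2)) + γ / 2 * C * ((T + 2) / (T + 1) / 2) ^ ((γ - 1) / 2))
        atTop (𝓝 (√(2 * (T + 2)))) := by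
      simpa using tendsto_const_nhds.add (((tendsto_mul_rpow_of_lt_one (by positivity) hq
        one_half_pos (-1 / 2)).const_mul (C / 2)).congr fun γ => by ring_nf)
    filter_upwards [hup.eventually_lt_const hTb, eventually_ge_atTop 1] with γ hγb hγ
    exact (phi_le hγ (by linarith)).trans_lt hγb
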